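/- arXiv:2405.11066 — 3 statements merged into one kernel-verified Lean document; each statement's English description precedes it below -/
import Mathlib

section
/- Let r, r', and M be positive real numbers with r' > r, and set μ_k := M·exp{−k·ln(r'/r)} = M·(r/r')^k for all k ∈ ℕ. Let ι map each f ∈ 𝒜(r'; M), with Taylor series f(z) = Σ_{k≥0} a_k z^k on D(0; r'), to the sequence {a_k·r^k}_{k∈ℕ}. Then ℰ_1({μ_k}_{k∈ℕ}) ⊆ ι(𝒜(r'; M)) ⊆ ℰ_2({μ_k}_{k∈ℕ}), i.e., every sequence {ã_k} with Σ_{k≥0} |ã_k|/μ_k ≤ 1 equals ι(f) for some f ∈ 𝒜(r'; M), and for every f ∈ 𝒜(r'; M) the sequence ι(f) = {ã_k} satisfies Σ_{k≥0} |ã_k/μ_k|² ≤ 1. -/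
open scoped BigOperators

/-- The class `𝒜(r'; M)` of functions analytic on the open disk `D(0;r')` and bounded by `M`. -/
def diskClass (r' M : ℝ) : Set (ℂ → ℂ) :=
  {f | DifferentiableOn ℂ f (Metric.ball (0 : ℂ) r') ∧
    ∀ z ∈ Metric.ball (0 : ℂ) r', ‖f z‖ ≤ M}

/-!
Write `a_k = c_k r^k`; since `μ_k = M (r/r')^k`, the weight `|a_k|/μ_k` is `|c_k| r'^k / M`.
If `∑ |c_k| r'^k ≤ M`, the series `∑ c_k z^k` converges normally on the disk of radius `r'`, so its
sum is holomorphic there and bounded by `M`. Conversely, on a circle `|z| = ρ < r'` the numbers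
`c_k ρ^k` are Fourier coefficients of `θ ↦ f(ρ e^{iθ})`, so Bessel's inequality in `L²` of the
circle gives `∑ |c_k|² ρ^{2k} ≤ sup |f|² ≤ M²`; let `ρ → r'`.
-/

open MeasureTheory Metric

section Orthonormal

variable {𝕜 E ι : Type*} [RCLike 𝕜] [NormedAddCommGroup E] [InnerProductSpace 𝕜 E]
  {v : ι → E} {b : ι → 𝕜} {x : E}

theorem Orthonormal.inner_eq_of_hasSum (hv : Orthonormal 𝕜 v)
    (hx : HasSum (fun i => b i • v i) x) (j : ι) : inner 𝕜 (v j) x = b j := by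
  classical
  have hj := hx.mapL (innerSL 𝕜 (v j))
  simp only [innerSL_apply_apply, inner_smul_right, orthonormal_iff_ite.mp hv, mul_ite, mul_one,
    mul_zero] at hj
  have hsingle : HasSum (fun i => if j = i then b i else 0) (b j) := by
    simpa using hasSum_single (f := fun i => if j = i then b i else 0) j fun i hi => if_neg hi.symm
  exact hj.unique hsingle

theorem Orthonormal.sum_norm_sq_le_of_hasSum (hv : Orthonormal 𝕜 v)
    (hx : HasSum (fun i => b i • v i) x) (s : Finset ι) : ∑ i ∈ s, ‖b i‖ ^ 2 ≤ ‖x‖ ^ 2 := by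
  simpa only [hv.inner_eq_of_hasSum hx] using hv.sum_inner_products_le x

end Orthonormal

theorem ContinuousMap.hasSum_of_summable_norm {X E ι : Type*} [TopologicalSpace X]
    [CompactSpace X] [NormedAddCommGroup E] [CompleteSpace E] {F : ι → C(X, E)} {g : C(X, E)}
    (hF : Summable fun i => ‖F i‖) (hg : ∀ x, HasSum (fun i => F i x) (g x)) : HasSum F g := by
  obtain ⟨G, hG⟩ := hF.of_norm
  have hgG : g = G := by
    ext x
    exact (hg x).unique <| hG.map ((Pi.evalAddMonoidHom _ x).comp ContinuousMap.coeFnAddMonoidHom)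
      (continuous_eval_const x)
  exact hgG ▸ hG

theorem ContinuousMap.norm_toLp_le {α E 𝕜 : Type*} [TopologicalSpace α] [CompactSpace α]
    [MeasurableSpace α] [BorelSpace α] [NormedAddCommGroup E] [SecondCountableTopologyEither α E]
    [NontriviallyNormedField 𝕜] [NormedSpace 𝕜 E] {p : ENNReal} [Fact (1 ≤ p)]
    (μ : Measure α) [IsProbabilityMeasure μ] (g : C(α, E)) :
    ‖ContinuousMap.toLp (E := E) p μ 𝕜 g‖ ≤ ‖g‖ := by
  refine ((ContinuousMap.toLp p μ 𝕜).le_opNorm g).trans (mul_le_of_le_one_left (norm_nonneg _) ?_)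
  simpa [measureUnivNNReal] using ContinuousMap.toLp_norm_le (E := E) (p := p) μ (𝕜 := 𝕜)

theorem fourier_natCast_apply {T : ℝ} (k : ℕ) (x : AddCircle T) :
    fourier (k : ℤ) x = (AddCircle.toCircle x : ℂ) ^ k := by
  rw [fourier_apply, AddCircle.toCircle_zsmul, zpow_natCast, Circle.coe_pow]

section PowerSeries

variable {c : ℕ → ℂ} {R M : ℝ}

theorem norm_mul_pow_le_of_norm_le {z : ℂ} (hz : ‖z‖ ≤ R) (k : ℕ) :
    ‖c k * z ^ k‖ ≤ ‖c k‖ * R ^ k := by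
  rw [norm_mul, norm_pow]
  gcongr

theorem hasSum_of_summable_norm_mul_pow (hs : Summable fun k => ‖c k‖ * R ^ k) {z : ℂ}
    (hz : ‖z‖ ≤ R) : HasSum (fun k => c k * z ^ k) (∑' k, c k * z ^ k) :=
  (Summable.of_norm_bounded hs (norm_mul_pow_le_of_norm_le hz)).hasSum

theorem tsum_mem_diskClass (hs : Summable fun k => ‖c k‖ * R ^ k)
    (hM : ∑' k, ‖c k‖ * R ^ k ≤ M) : (fun z => ∑' k, c k * z ^ k) ∈ diskClass R M := by
  have hle : ∀ k, ∀ z ∈ ball (0 : ℂ) R, ‖c k * z ^ k‖ ≤ ‖c k‖ * R ^ k :=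
    fun k z hz => norm_mul_pow_le_of_norm_le (mem_ball_zero_iff.mp hz).le k
  refine ⟨Complex.differentiableOn_tsum_of_summable_norm hs (fun k => by fun_prop) isOpen_ball hle,
    fun z hz => ?_⟩
  exact (tsum_of_norm_bounded hs.hasSum fun k => hle k z hz).trans hM

theorem sum_sq_norm_mul_pow_le_of_lt {f : ℂ → ℂ} (hf : f ∈ diskClass R M)
    (hc : ∀ z ∈ ball (0 : ℂ) R, HasSum (fun k => c k * z ^ k) (f z))
    {ρ : ℝ} (hρ₀ : 0 ≤ ρ) (hρ : ρ < R) (s : Finset ℕ) :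
    ∑ k ∈ s, (‖c k‖ * ρ ^ k) ^ 2 ≤ M ^ 2 := by
  have hmem (x : AddCircle (1 : ℝ)) : (ρ : ℂ) * AddCircle.toCircle x ∈ ball (0 : ℂ) R := by
    simpa [abs_of_nonneg hρ₀, Circle.norm_coe] using hρ
  let g : C(AddCircle (1 : ℝ), ℂ) :=
    ⟨fun x => f (ρ * AddCircle.toCircle x), hf.1.continuousOn.comp_continuous (by fun_prop) hmem⟩
  have hnorm (k : ℕ) : ‖c k * (ρ : ℂ) ^ k‖ = ‖c k‖ * ρ ^ k := by
    simp [abs_of_nonneg hρ₀]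
  have hg : HasSum (fun k : ℕ => (c k * (ρ : ℂ) ^ k) • fourier (k : ℤ)) g := by
    refine ContinuousMap.hasSum_of_summable_norm ?_ fun x => ?_
    -- summation in `ℂ` is unconditional, hence absolute
    · simpa [norm_smul, fourier_norm, abs_of_nonneg hρ₀] using
        (hc ρ (by simpa [abs_of_nonneg hρ₀] using hρ)).summable.norm
    · show HasSum _ (f (ρ * AddCircle.toCircle x))
      simpa only [ContinuousMap.smul_apply, smul_eq_mul, fourier_natCast_apply, mul_pow, mul_assoc]
        using hc _ (hmem x)
  have hgL2 := hg.mapL (ContinuousMap.toLp 2 AddCircle.haarAddCircle ℂ)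
  have horth := (orthonormal_fourier (T := 1)).comp _ Nat.cast_injective
  have hgM : ‖g‖ ≤ M := (ContinuousMap.norm_le_of_nonempty g).mpr fun x => hf.2 _ (hmem x)
  calc ∑ k ∈ s, (‖c k‖ * ρ ^ k) ^ 2 = ∑ k ∈ s, ‖c k * (ρ : ℂ) ^ k‖ ^ 2 := by simp only [hnorm]
    _ ≤ ‖ContinuousMap.toLp 2 AddCircle.haarAddCircle ℂ g‖ ^ 2 :=
        horth.sum_norm_sq_le_of_hasSum (by simpa using hgL2) s
    _ ≤ M ^ 2 := by gcongr; exact (ContinuousMap.norm_toLp_le _ g).trans hgM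

theorem summable_sq_norm_mul_pow_and_tsum_le {f : ℂ → ℂ} (hR : 0 < R) (hf : f ∈ diskClass R M)
    (hc : ∀ z ∈ ball (0 : ℂ) R, HasSum (fun k => c k * z ^ k) (f z)) :
    Summable (fun k => (‖c k‖ * R ^ k) ^ 2) ∧ ∑' k, (‖c k‖ * R ^ k) ^ 2 ≤ M ^ 2 := by
  have hpartial (s : Finset ℕ) : ∑ k ∈ s, (‖c k‖ * R ^ k) ^ 2 ≤ M ^ 2 := by
    have hcont : Continuous fun ρ : ℝ => ∑ k ∈ s, (‖c k‖ * ρ ^ k) ^ 2 := by fun_prop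
    refine le_of_tendsto (hcont.continuousWithinAt (s := Set.Iio R)) ?_
    filter_upwards [Ioo_mem_nhdsLT hR] with ρ hρ
    exact sum_sq_norm_mul_pow_le_of_lt hf hc hρ.1.le hρ.2 s
  exact ⟨summable_of_sum_le (fun k => sq_nonneg _) hpartial,
    tsum_le_of_sum_le' (by positivity) hpartial⟩

end PowerSeries

theorem norm_mul_pow_div_exp_neg_mul_log {r r' : ℝ} (M : ℝ) (hr : 0 < r) (hr' : 0 < r') (a : ℂ)
    (k : ℕ) : ‖a * (r : ℂ) ^ k‖ / (M * Real.exp (-(k * Real.log (r' / r)))) = ‖a‖ * r' ^ k / M := by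
  rw [← Real.log_pow, Real.exp_neg, Real.exp_log (by positivity), norm_mul, norm_pow,
    Complex.norm_real, Real.norm_of_nonneg hr.le, div_pow]
  field_simp

/-- **Lemma (ellipsoidal structure of `ι(𝒜(r';M))`).** With semi-axes
`μ_k = M·exp(-k·ln(r'/r)) = M·(r/r')^k` and `ι(f) = {a_k·r^k}_k` (where `{a_k}` are the
Taylor coefficients of `f`), we have `ℰ₁({μ_k}) ⊆ ι(𝒜(r';M)) ⊆ ℰ₂({μ_k})`. -/
theorem stmt10 (r r' M : ℝ) (hr : 0 < r) (hrr' : r < r') (hM : 0 < M) :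
    (∀ a : ℕ → ℂ,
      Summable (fun k : ℕ => ‖a k‖ / (M * Real.exp (-(k * Real.log (r' / r))))) →
      (∑' k : ℕ, ‖a k‖ / (M * Real.exp (-(k * Real.log (r' / r))))) ≤ 1 →
      ∃ f ∈ diskClass r' M, ∃ c : ℕ → ℂ,
        (∀ z ∈ Metric.ball (0 : ℂ) r', HasSum (fun k : ℕ => c k * z ^ k) (f z)) ∧
        ∀ k : ℕ, a k = c k * (r : ℂ) ^ k) ∧
    (∀ f ∈ diskClass r' M, ∀ c : ℕ → ℂ,
      (∀ z ∈ Metric.ball (0 : ℂ) r', HasSum (fun k : ℕ => c k * z ^ k) (f z)) →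
      Summable (fun k : ℕ =>
        (‖c k * (r : ℂ) ^ k‖ / (M * Real.exp (-(k * Real.log (r' / r))))) ^ 2) ∧
      (∑' k : ℕ,
        (‖c k * (r : ℂ) ^ k‖ / (M * Real.exp (-(k * Real.log (r' / r))))) ^ 2) ≤ 1) := by
  have hr' : 0 < r' := hr.trans hrr'
  have hweight := norm_mul_pow_div_exp_neg_mul_log M hr hr'
  refine ⟨fun a ha ha1 => ?_, fun f hf c hc => ?_⟩
  · obtain ⟨c, rfl⟩ : ∃ c : ℕ → ℂ, a = fun k => c k * (r : ℂ) ^ k :=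
      ⟨fun k => a k / (r : ℂ) ^ k, funext fun k =>
        (div_mul_cancel₀ (a k) (pow_ne_zero k (Complex.ofReal_ne_zero.mpr hr.ne'))).symm⟩
    simp only [hweight] at ha ha1
    have hs : Summable fun k => ‖c k‖ * r' ^ k := (summable_div_const_iff hM.ne').mp ha
    have hle : ∑' k, ‖c k‖ * r' ^ k ≤ M := by rwa [tsum_div_const, div_le_one hM] at ha1
    exact ⟨_, tsum_mem_diskClass hs hle, c,
      fun z hz => hasSum_of_summable_norm_mul_pow hs (mem_ball_zero_iff.mp hz).le, fun k => rfl⟩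
  · obtain ⟨hs, hle⟩ := summable_sq_norm_mul_pow_and_tsum_le hr' hf hc
    simp only [hweight, div_pow]
    exact ⟨hs.div_const _, by rwa [tsum_div_const, div_le_one (by positivity)]⟩
end

section
/- Let ψ be a decay rate function with parameter t* ≥ 0 and let ψ^{(−1)} : (0,∞) → (t*,∞) denote its inverse. Then ψ^{(−1)} is subadditive: for all a, b > 0, ψ^{(−1)}(a + b) ≤ ψ^{(−1)}(a) + ψ^{(−1)}(b). -/
/-- **Lemma (subadditivity of the inverse of a decay rate function).** Let `ψ : (0,∞) → ℝ`
be smooth with `ψ((t*,∞)) = (0,∞)` and `t ↦ ψ(t)/t` non-decreasing on `(t*,∞)` (`t* ≥ 0`),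
and let `ψinv : (0,∞) → (t*,∞)` be its inverse. Then `ψinv` is subadditive:
`ψinv(a+b) ≤ ψinv(a) + ψinv(b)` for all `a, b > 0`. -/
theorem stmt17 (tstar : ℝ) (htstar : 0 ≤ tstar) (ψ : ℝ → ℝ)
    (hsmooth : ContDiffOn ℝ (⊤ : ℕ∞) ψ (Set.Ioi 0))
    (hsurj : ψ '' Set.Ioi tstar = Set.Ioi 0)
    (hratio : ∀ a ∈ Set.Ioi tstar, ∀ b ∈ Set.Ioi tstar, a ≤ b → ψ a / a ≤ ψ b / b)
    (ψinv : ℝ → ℝ)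
    (hinv₁ : ∀ t ∈ Set.Ioi tstar, ψinv (ψ t) = t)
    (hinv₂ : ∀ u ∈ Set.Ioi (0 : ℝ), ψ (ψinv u) = u ∧ ψinv u ∈ Set.Ioi tstar) :
    ∀ a b : ℝ, 0 < a → 0 < b → ψinv (a + b) ≤ ψinv a + ψinv b := by
  -- ψ is positive on Ioi tstar
  have hpos : ∀ t ∈ Set.Ioi tstar, 0 < ψ t := by
    intro t ht
    have : ψ t ∈ Set.Ioi (0:ℝ) := hsurj ▸ Set.mem_image_of_mem ψ ht
    exact this
  -- ψ is strictly monotone on Ioi tstar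
  have hmono : ∀ s ∈ Set.Ioi tstar, ∀ t ∈ Set.Ioi tstar, s < t → ψ s < ψ t := by
    intro s hs t ht hst
    have hs0 : (0:ℝ) < s := lt_of_le_of_lt htstar hs
    have ht0 : (0:ℝ) < t := lt_of_le_of_lt htstar ht
    have hr := hratio s hs t ht hst.le
    have h1 : ψ s ≤ s * (ψ t / t) := by
      have := mul_le_mul_of_nonneg_left hr hs0.le
      calc ψ s = s * (ψ s / s) := by field_simp
        _ ≤ s * (ψ t / t) := this
    have h2 : s * (ψ t / t) < t * (ψ t / t) :=
      mul_lt_mul_of_pos_right hst (div_pos (hpos t ht) ht0)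
    calc ψ s ≤ s * (ψ t / t) := h1
      _ < t * (ψ t / t) := h2
      _ = ψ t := by field_simp
  intro a b ha hb
  obtain ⟨hψa, hxa⟩ := hinv₂ a ha
  obtain ⟨hψb, hxb⟩ := hinv₂ b hb
  set x := ψinv a with hx
  set y := ψinv b with hy
  have hx0 : (0:ℝ) < x := lt_of_le_of_lt htstar hxa
  have hy0 : (0:ℝ) < y := lt_of_le_of_lt htstar hxb
  have hxy : x + y ∈ Set.Ioi tstar := by
    simp only [Set.mem_Ioi] at *
    linarith
  have hxy0 : (0:ℝ) < x + y := by linarith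
  -- key: ψ (x+y) ≥ a + b
  have hrx := hratio x hxa (x+y) hxy (by linarith)
  have hry := hratio y hxb (x+y) hxy (by linarith)
  have key : a + b ≤ ψ (x + y) := by
    have h1 : a ≤ x * (ψ (x+y) / (x+y)) := by
      have := mul_le_mul_of_nonneg_left hrx hx0.le
      calc a = x * (ψ x / x) := by rw [← hψa]; field_simp
        _ ≤ x * (ψ (x+y) / (x+y)) := this
    have h2 : b ≤ y * (ψ (x+y) / (x+y)) := by
      have := mul_le_mul_of_nonneg_left hry hy0.le
      calc b = y * (ψ y / y) := by rw [← hψb]; field_simp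
        _ ≤ y * (ψ (x+y) / (x+y)) := this
    have h3 : x * (ψ (x+y) / (x+y)) + y * (ψ (x+y) / (x+y)) = ψ (x+y) := by
      field_simp
    linarith
  -- conclude
  obtain ⟨hψab, hxab⟩ := hinv₂ (a + b) (Set.mem_Ioi.mpr (by linarith))
  by_contra hcon
  push_neg at hcon
  have : ψ (x + y) < ψ (ψinv (a + b)) := hmono _ hxy _ hxab hcon
  rw [hψab] at this
  linarith
end

section
/- Let 𝕂 ∈ {ℝ, ℂ} and p, q ∈ [1, ∞], and for d ∈ ℕ* let V_{p,q}^{𝕂,d} := vol_𝕂(ℬ_p)/vol_𝕂(ℬ_q) be the ratio of the volumes of the unit balls of the p-norm and the q-norm in 𝕂^d (where for 𝕂 = ℂ the volume is the Lebesgue measure on ℝ^{2d} after identifying ℂ^d with ℝ^{2d}). Then log₂((V_{p,q}^{𝕂,d})^{1/σ_𝕂(d)}) = (1/q − 1/p)·log₂(σ_𝕂(d)) + O_{d→∞}(1), i.e., there exist a constant C > 0 and d₀ ∈ ℕ* such that |log₂((V_{p,q}^{𝕂,d})^{1/σ_𝕂(d)}) − (1/q − 1/p)·log₂(σ_𝕂(d))|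 ≤ C for all d ≥ d₀. -/
open scoped BigOperators ENNReal

/-- The `p`-norm on `𝕂^d`, `p ∈ [1,∞]`. -/
noncomputable def finQNorm {𝕂 : Type*} [RCLike 𝕂] {d : ℕ} (p : ℝ≥0∞) (x : Fin d → 𝕂) : ℝ :=
  if p = ∞ then ⨆ i, ‖x i‖ else (∑ i, ‖x i‖ ^ p.toReal) ^ (1 / p.toReal)


open MeasureTheory Real in
private
lemma logGamma_asymp (s : ℝ) (hs : 0 ≤ s) :
    ∃ C : ℝ, 0 < C ∧ ∃ d₀ : ℕ, 1 ≤ d₀ ∧ ∀ d : ℕ, d₀ ≤ d →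
      |Real.log (Real.Gamma (s * d + 1)) - s * d * Real.log d| ≤ C * d := by
  rcases eq_or_lt_of_le hs with hs0 | hs0
  · refine ⟨1, one_pos, 1, le_refl 1, fun d hd => ?_⟩
    simp [← hs0, Real.Gamma_one]
  · -- s > 0
    set L : ℝ := Real.log (s/2) with hL
    set C1 : ℝ := (s+1) * Real.log (s+1) + 1 with hC1
    set C2 : ℝ := 1 + (s+1) * |L| + s with hC2
    have hC1pos : 0 < C1 := by
      have := mul_nonneg (by linarith : (0:ℝ) ≤ s+1) (Real.log_nonneg (by linarith : (1:ℝ) ≤ s+1))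
      rw [hC1]; linarith
    have hCpos : 0 < max C1 C2 + 1 := by
      have := le_max_left C1 C2; linarith
    clear_value L C1 C2
    refine ⟨max C1 C2 + 1, hCpos, ⌈6/s⌉₊ + 2, by omega, fun d hd => ?_⟩
    have hd1 : (1:ℝ) ≤ d := by exact_mod_cast Nat.one_le_iff_ne_zero.mpr (by omega)
    have hdge : (6:ℝ)/s ≤ d := by
      calc (6:ℝ)/s ≤ ⌈6/s⌉₊ := Nat.le_ceil _
      _ ≤ d := by exact_mod_cast Nat.le_of_lt (by omega)
    have hx6 : 6 ≤ s * d := by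
      rw [div_le_iff₀ hs0] at hdge; linarith
    set x : ℝ := s * d with hxdef
    clear_value x
    have hx0 : 0 < x := by linarith
    have hlogd : 0 ≤ Real.log d := Real.log_nonneg hd1
    have hlogdd : Real.log d ≤ d := by
      have := Real.log_le_sub_one_of_pos (by linarith : (0:ℝ) < d)
      linarith
    have hCle : C1 ≤ max C1 C2 + 1 ∧ C2 ≤ max C1 C2 + 1 :=
      ⟨le_trans (le_max_left _ _) (by linarith), le_trans (le_max_right _ _) (by linarith)⟩
    rw [abs_le]
    have hs1 : (0:ℝ) ≤ Real.log (s+1) := Real.log_nonneg (by linarith)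
    constructor
    · -- lower bound : -C * d ≤ log Γ(x+1) - x log d
      set m : ℕ := ⌊x⌋₊ with hm
      have hm6 : (6:ℕ) ≤ m := Nat.le_floor (by exact_mod_cast hx6)
      have hm6' : (6:ℝ) ≤ m := by exact_mod_cast hm6
      have hmx : (m:ℝ) ≤ x := Nat.floor_le hx0.le
      have hxm : x - 1 ≤ m := le_of_lt (Nat.sub_one_lt_floor x)
      have hg1 : Gamma ((m:ℝ)+1) ≤ Gamma (x+1) := by
        refine Real.Gamma_strictMonoOn_Ici.monotoneOn ?_ ?_ (by linarith) <;>
          simp [Set.mem_Ici] <;> linarith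
      have hg2 : Gamma ((m:ℝ)+1) = (Nat.factorial m : ℝ) := Real.Gamma_nat_eq_factorial m
      have hfacpos : (0:ℝ) < (Nat.factorial m : ℝ) := by exact_mod_cast Nat.factorial_pos m
      have hfac : (m:ℝ)^m ≤ Real.exp m * (Nat.factorial m : ℝ) := by
        have h := Real.pow_div_factorial_le_exp (x := (m:ℝ)) (Nat.cast_nonneg m) m
        rw [div_le_iff₀ hfacpos] at h
        linarith [mul_comm (Real.exp (m:ℝ)) ((Nat.factorial m : ℝ))]
      have hlogfac : (m:ℝ) * Real.log m - m ≤ Real.log (Nat.factorial m : ℝ) := by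
        have h1 : Real.log ((m:ℝ)^m) ≤ Real.log (Real.exp m * (Nat.factorial m : ℝ)) :=
          Real.log_le_log (by positivity) hfac
        rw [Real.log_pow, Real.log_mul (Real.exp_ne_zero _) (ne_of_gt hfacpos),
          Real.log_exp] at h1
        linarith
      have hGlow : (m:ℝ) * Real.log m - m ≤ Real.log (Gamma (x+1)) := by
        have := Real.log_le_log (by rw [hg2]; exact hfacpos) hg1
        rw [hg2] at this; linarith
      -- m log m ≥ (x-1)(L + log d)
      have hhalf : s/2 * d = x/2 := by rw [hxdef]; ring
      have hLd : L + Real.log d = Real.log (x/2) := by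
        rw [hL, ← Real.log_mul (by positivity) (by linarith), hhalf]
      have hLd0 : 0 ≤ L + Real.log d := by
        rw [hLd]; exact Real.log_nonneg (by linarith)
      have hlogm : L + Real.log d ≤ Real.log m := by
        rw [hLd]; exact Real.log_le_log (by linarith) (by linarith)
      have hmm : (x-1) * (L + Real.log d) ≤ (m:ℝ) * Real.log m :=
        mul_le_mul hxm hlogm hLd0 (by positivity)
      -- combine
      have habs1 : -|L| ≤ L := neg_abs_le L
      have habs2 : L ≤ |L| := le_abs_self L
      have hd0 : (0:ℝ) ≤ d := by linarith
      have h1 : -(s * (d:ℝ) * |L|) ≤ x*L := by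
        rw [hxdef]
        have := mul_le_mul_of_nonneg_left (neg_abs_le L) (mul_nonneg hs0.le hd0)
        linarith
      have h2 : |L| ≤ |L| * d := le_mul_of_one_le_right (abs_nonneg L) hd1
      have h3 : C2 * d = d + s * |L| * (d:ℝ) + |L| * d + s*d := by rw [hC2]; ring
      have hexpand : (x-1)*(L + Real.log d) - x - x*Real.log d
          = x*L - L - Real.log d - x := by ring
      have hC2d : -(C2 * d) ≤ (x-1)*(L + Real.log d) - x - x * Real.log d := by
        rw [hexpand, h3]
        have hLL : -|L| ≤ L := neg_abs_le L
        linarith [hxdef.ge, hxdef.le]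
      have hstep : C2 * d ≤ (max C1 C2 + 1) * d :=
        mul_le_mul_of_nonneg_right hCle.2 hd0
      have hfin : (x-1)*(L + Real.log d) - x - x*Real.log d
          ≤ Real.log (Gamma (x+1)) - x * Real.log d := by linarith
      linarith
    · -- upper bound
      set n : ℕ := ⌈x⌉₊ with hn
      have hxn : x ≤ n := Nat.le_ceil x
      have hnx : (n:ℝ) ≤ x + 1 := le_of_lt (Nat.ceil_lt_add_one hx0.le)
      have hg1 : Gamma (x+1) ≤ Gamma ((n:ℝ)+1) := by
        refine Real.Gamma_strictMonoOn_Ici.monotoneOn ?_ ?_ (by linarith) <;>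
          simp [Set.mem_Ici] <;> linarith
      have hg2 : Gamma ((n:ℝ)+1) = (Nat.factorial n : ℝ) := Real.Gamma_nat_eq_factorial n
      have hfle : (Nat.factorial n : ℝ) ≤ (n:ℝ)^n := by exact_mod_cast Nat.factorial_le_pow n
      have hGup : Real.log (Gamma (x+1)) ≤ (n:ℝ) * Real.log n := by
        have h1 : Real.log (Gamma (x+1)) ≤ Real.log ((n:ℝ)^n) := by
          refine Real.log_le_log (Real.Gamma_pos_of_pos (by linarith)) ?_
          rw [hg2] at hg1; linarith
        rwa [Real.log_pow] at h1
      have hxd1 : x + 1 ≤ (s+1) * d := by rw [hxdef]; nlinarith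
      have hlogn : Real.log n ≤ Real.log (s+1) + Real.log d := by
        rw [← Real.log_mul (by linarith) (by linarith)]
        exact Real.log_le_log (by linarith) (by linarith)
      have hlognn : 0 ≤ Real.log n := Real.log_nonneg (by linarith)
      have hnn : (n:ℝ) * Real.log n ≤ (x+1) * (Real.log (s+1) + Real.log d) :=
        mul_le_mul hnx hlogn hlognn (by linarith)
      calc Real.log (Gamma (x+1)) - x * Real.log d
          ≤ (x+1) * (Real.log (s+1) + Real.log d) - x * Real.log d := by linarith
        _ = (x+1) * Real.log (s+1) + Real.log d := by ring
        _ ≤ (s+1)*d * Real.log (s+1) + d := by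
            have := mul_le_mul_of_nonneg_right hxd1 hs1
            nlinarith
        _ = C1 * d := by rw [hC1]; ring
        _ ≤ (max C1 C2 + 1) * d := mul_le_mul_of_nonneg_right hCle.1 (by linarith)

open MeasureTheory Real in
private lemma vol_real_eq (p : ℝ≥0∞) (hp : 1 ≤ p) (d : ℕ) (hd : 1 ≤ d) :
    (volume {x : Fin d → ℝ | finQNorm p x ≤ 1}).toReal
      = (2 * Real.Gamma ((1/p).toReal + 1)) ^ d / Real.Gamma ((1/p).toReal * d + 1) := by
  haveI : Nonempty (Fin d) := ⟨⟨0, by omega⟩⟩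
  rcases eq_or_ne p ∞ with rfl | hptop
  · have hset : {x : Fin d → ℝ | finQNorm ∞ x ≤ 1}
        = Set.pi Set.univ (fun _ : Fin d => Set.Icc (-1:ℝ) 1) := by
      ext x
      simp only [finQNorm, if_pos rfl, Set.mem_setOf_eq, Set.mem_pi, Set.mem_univ, true_implies,
        Set.mem_Icc, if_true]
      rw [ciSup_le_iff (Set.Finite.bddAbove (Set.finite_range _))]
      simp [Real.norm_eq_abs, abs_le]
    rw [hset, volume_pi_pi]
    simp only [Real.volume_Icc, Finset.prod_const, Finset.card_univ, Fintype.card_fin]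
    norm_num [Real.Gamma_one]
  · have hp1 : 1 ≤ p.toReal := by
      rw [← ENNReal.toReal_one]
      exact ENNReal.toReal_mono hptop hp
    have hs : (1/p).toReal = 1 / p.toReal := by
      rw [one_div, one_div, ENNReal.toReal_inv]
    have hset : {x : Fin d → ℝ | finQNorm p x ≤ 1}
        = {x : Fin d → ℝ | (∑ i, |x i| ^ p.toReal) ^ (1 / p.toReal) ≤ (1:ℝ)} := by
      simp [finQNorm, if_neg hptop, Real.norm_eq_abs]
    rw [hset, MeasureTheory.volume_sum_rpow_le (Fin d) hp1 1]
    simp only [Fintype.card_fin, ENNReal.ofReal_one, one_pow, one_mul]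
    rw [ENNReal.toReal_ofReal]
    · rw [hs]
      congr 2
      ring
    · have h1 : 0 < Real.Gamma (d / p.toReal + 1) :=
        Real.Gamma_pos_of_pos (by positivity)
      have h2 : 0 < Real.Gamma (1 / p.toReal + 1) :=
        Real.Gamma_pos_of_pos (by positivity)
      positivity

open MeasureTheory Real in
private lemma vol_complex_eq (p : ℝ≥0∞) (hp : 1 ≤ p) (d : ℕ) (hd : 1 ≤ d) :
    (volume {x : Fin d → ℂ | finQNorm p x ≤ 1}).toReal
      = (π * Real.Gamma (2 * (1/p).toReal + 1)) ^ d
          / Real.Gamma (2 * (1/p).toReal * d + 1) := by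
  haveI : Nonempty (Fin d) := ⟨⟨0, by omega⟩⟩
  rcases eq_or_ne p ∞ with rfl | hptop
  · have hset : {x : Fin d → ℂ | finQNorm ∞ x ≤ 1}
        = Set.pi Set.univ (fun _ : Fin d => Metric.closedBall (0:ℂ) 1) := by
      ext x
      simp only [finQNorm, if_pos rfl, Set.mem_setOf_eq, Set.mem_pi, Set.mem_univ, true_implies,
        mem_closedBall_zero_iff, if_true]
      rw [ciSup_le_iff (Set.Finite.bddAbove (Set.finite_range _))]
    rw [hset, volume_pi_pi]
    simp only [Complex.volume_closedBall, ENNReal.ofReal_one, one_pow, one_mul,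
      Finset.prod_const, Finset.card_univ, Fintype.card_fin]
    rw [ENNReal.toReal_pow, ENNReal.coe_toReal, NNReal.coe_real_pi]
    norm_num [Real.Gamma_one]
  · have hp1 : 1 ≤ p.toReal := by
      rw [← ENNReal.toReal_one]
      exact ENNReal.toReal_mono hptop hp
    have hs : (1/p).toReal = 1 / p.toReal := by
      rw [one_div, one_div, ENNReal.toReal_inv]
    have hset : {x : Fin d → ℂ | finQNorm p x ≤ 1}
        = {x : Fin d → ℂ | (∑ i, ‖x i‖ ^ p.toReal) ^ (1 / p.toReal) ≤ (1:ℝ)} := by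
      simp [finQNorm, if_neg hptop]
    rw [hset, Complex.volume_sum_rpow_le (Fin d) hp1 1]
    simp only [Fintype.card_fin, ENNReal.ofReal_one, one_pow, one_mul]
    rw [ENNReal.toReal_ofReal]
    · rw [hs]
      congr 2
      · ring
      · ring
    · have h1 : 0 < Real.Gamma (2 * d / p.toReal + 1) :=
        Real.Gamma_pos_of_pos (by positivity)
      have h2 : 0 < Real.Gamma (2 / p.toReal + 1) :=
        Real.Gamma_pos_of_pos (by positivity)
      positivity

open Real in
private lemma core_assemble (c A B Gp Gq sp sq Cp Cq : ℝ) (hc : 0 < c)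
    (hA : 0 < A) (hB : 0 < B) (hGp : 0 < Gp) (hGq : 0 < Gq)
    (d : ℕ) (hd : (1:ℝ) ≤ d)
    (hpb : |Real.log Gp - c * sp * d * Real.log d| ≤ Cp * d)
    (hqb : |Real.log Gq - c * sq * d * Real.log d| ≤ Cq * d) :
    |Real.logb 2 (((A^d/Gp)/(B^d/Gq)) ^ (1/(c*(d:ℝ)))) - (sq - sp) * Real.logb 2 (c*d)|
      ≤ (|Real.log A - Real.log B|/c + (Cp + Cq)/c + |sq - sp| * |Real.log c|)
          / Real.log 2 := by
  have hd0 : (0:ℝ) < d := lt_of_lt_of_le one_pos hd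
  have hV : (0:ℝ) < (A^d/Gp)/(B^d/Gq) := by positivity
  have hlog2 : 0 < Real.log 2 := Real.log_pos one_lt_two
  rw [Real.logb, Real.logb, Real.log_rpow hV]
  have h1 : Real.log ((A^d/Gp)/(B^d/Gq))
      = ((d:ℝ) * Real.log A - Real.log Gp) - ((d:ℝ) * Real.log B - Real.log Gq) := by
    rw [Real.log_div (by positivity) (by positivity),
      Real.log_div (by positivity) (by positivity),
      Real.log_div (by positivity) (by positivity), Real.log_pow, Real.log_pow]
  have hlogcd : Real.log (c*d) = Real.log c + Real.log d := Real.log_mul hc.ne' hd0.ne'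
  obtain ⟨ep, hep⟩ : ∃ ep, Real.log Gp = c * sp * d * Real.log d + ep :=
    ⟨Real.log Gp - c * sp * d * Real.log d, by ring⟩
  obtain ⟨eq', heq⟩ : ∃ eq', Real.log Gq = c * sq * d * Real.log d + eq' :=
    ⟨Real.log Gq - c * sq * d * Real.log d, by ring⟩
  rw [hep, add_sub_cancel_left] at hpb
  rw [heq, add_sub_cancel_left] at hqb
  have hiden : 1/(c*(d:ℝ)) * Real.log ((A^d/Gp)/(B^d/Gq)) / Real.log 2
        - (sq - sp) * (Real.log (c*d) / Real.log 2)
      = ((Real.log A - Real.log B)/c + (eq' - ep)/(c*d) - (sq - sp) * Real.log c)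
          / Real.log 2 := by
    rw [h1, hlogcd, hep, heq]
    field_simp
    ring
  rw [hiden, abs_div, abs_of_pos hlog2]
  gcongr
  have habs : |(Real.log A - Real.log B)/c + (eq' - ep)/(c*d) - (sq-sp) * Real.log c|
      ≤ |(Real.log A - Real.log B)/c| + |(eq' - ep)/(c*d)| + |(sq-sp) * Real.log c| := by
    calc _ ≤ |(Real.log A - Real.log B)/c + (eq' - ep)/(c*d)| + |(sq-sp) * Real.log c| :=
          abs_sub _ _
      _ ≤ _ := by
          have := abs_add_le ((Real.log A - Real.log B)/c) ((eq' - ep)/(c*d))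
          linarith
  have h2 : |(Real.log A - Real.log B)/c| = |Real.log A - Real.log B|/c := by
    rw [abs_div, abs_of_pos hc]
  have h3 : |(eq' - ep)/(c*d)| ≤ (Cp + Cq)/c := by
    rw [abs_div, abs_of_pos (mul_pos hc hd0)]
    have h4 : |eq' - ep| ≤ (Cp + Cq) * d := by
      calc |eq' - ep| ≤ |eq'| + |ep| := abs_sub _ _
        _ ≤ Cq * d + Cp * d := add_le_add hqb hpb
        _ = (Cp + Cq) * d := by ring
    calc |eq' - ep| / (c*d) ≤ ((Cp + Cq) * d) / (c*d) := by gcongr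
      _ = (Cp + Cq)/c := by field_simp
  have h5 : |(sq-sp) * Real.log c| = |sq - sp| * |Real.log c| := abs_mul _ _
  linarith

/-- **Lemma (asymptotics of volume ratios of unit balls).** For 𝕂 ∈ {ℝ, ℂ} and
`V_{p,q}^{𝕂,d} = vol(ℬ_p)/vol(ℬ_q)`,
`log₂((V_{p,q}^{𝕂,d})^{1/σ_𝕂(d)}) = (1/q - 1/p)·log₂(σ_𝕂(d)) + O_{d→∞}(1)`,
where `σ_ℝ(d) = d` and `σ_ℂ(d) = 2d` (the complex volume being Lebesgue measure on
`ℝ^{2d}` after identifying `ℂ^d ≅ ℝ^{2d}`). -/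
theorem stmt18 (p q : ℝ≥0∞) (hp : 1 ≤ p) (hq : 1 ≤ q) :
    (∃ C : ℝ, 0 < C ∧ ∃ d₀ : ℕ, ∀ d : ℕ, d₀ ≤ d →
      |Real.logb 2
          (((MeasureTheory.volume {x : Fin d → ℝ | finQNorm p x ≤ 1}).toReal /
              (MeasureTheory.volume {x : Fin d → ℝ | finQNorm q x ≤ 1}).toReal)
            ^ (1 / (d : ℝ)))
        - ((1 / q).toReal - (1 / p).toReal) * Real.logb 2 (d : ℝ)| ≤ C) ∧
    (∃ C : ℝ, 0 < C ∧ ∃ d₀ : ℕ, ∀ d : ℕ, d₀ ≤ d →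
      |Real.logb 2
          (((MeasureTheory.volume {x : Fin d → ℂ | finQNorm p x ≤ 1}).toReal /
              (MeasureTheory.volume {x : Fin d → ℂ | finQNorm q x ≤ 1}).toReal)
            ^ (1 / (2 * (d : ℝ))))
        - ((1 / q).toReal - (1 / p).toReal) * Real.logb 2 (2 * (d : ℝ))| ≤ C) := by
  have hlog2 : 0 < Real.log 2 := Real.log_pos one_lt_two
  have hsp : 0 ≤ (1/p).toReal := ENNReal.toReal_nonneg
  have hsq : 0 ≤ (1/q).toReal := ENNReal.toReal_nonneg
  constructor
  · -- real case
    obtain ⟨Cp, hCp, dp, hdp, hbp⟩ := logGamma_asymp (1/p).toReal hsp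
    obtain ⟨Cq, hCq, dq, hdq, hbq⟩ := logGamma_asymp (1/q).toReal hsq
    set A : ℝ := 2 * Real.Gamma ((1/p).toReal + 1) with hAdef
    set B : ℝ := 2 * Real.Gamma ((1/q).toReal + 1) with hBdef
    have hA : 0 < A := by
      have := Real.Gamma_pos_of_pos (by linarith : (0:ℝ) < (1/p).toReal + 1)
      rw [hAdef]; linarith
    have hB : 0 < B := by
      have := Real.Gamma_pos_of_pos (by linarith : (0:ℝ) < (1/q).toReal + 1)
      rw [hBdef]; linarith
    set K : ℝ := |Real.log A - Real.log B| + (Cp + Cq) with hKdef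
    have hK : 0 ≤ K := by
      have := abs_nonneg (Real.log A - Real.log B); rw [hKdef]; linarith
    refine ⟨K / Real.log 2 + 1, by positivity, max (max dp dq) 1, fun d hd => ?_⟩
    have hd1 : 1 ≤ d := le_trans (le_max_right _ _) hd
    have hdR : (1:ℝ) ≤ (d:ℝ) := by exact_mod_cast hd1
    have hGp : 0 < Real.Gamma ((1/p).toReal * d + 1) :=
      Real.Gamma_pos_of_pos (by positivity)
    have hGq : 0 < Real.Gamma ((1/q).toReal * d + 1) :=
      Real.Gamma_pos_of_pos (by positivity)
    have hpb : |Real.log (Real.Gamma ((1/p).toReal * d + 1))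
        - 1 * (1/p).toReal * d * Real.log d| ≤ Cp * d := by
      rw [one_mul]; exact hbp d (le_trans (le_trans (le_max_left _ _) (le_max_left _ _)) hd)
    have hqb : |Real.log (Real.Gamma ((1/q).toReal * d + 1))
        - 1 * (1/q).toReal * d * Real.log d| ≤ Cq * d := by
      rw [one_mul]; exact hbq d (le_trans (le_trans (le_max_right _ _) (le_max_left _ _)) hd)
    rw [vol_real_eq p hp d hd1, vol_real_eq q hq d hd1]
    have hbound := core_assemble 1 A B _ _ (1/p).toReal (1/q).toReal Cp Cq one_pos
      hA hB hGp hGq d hdR hpb hqb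
    simp only [one_mul, div_one, Real.log_one, abs_zero, mul_zero, add_zero] at hbound
    calc _ ≤ _ := hbound
      _ ≤ K / Real.log 2 + 1 := by rw [hKdef]; linarith
  · -- complex case
    obtain ⟨Cp, hCp, dp, hdp, hbp⟩ := logGamma_asymp (2 * (1/p).toReal) (by linarith)
    obtain ⟨Cq, hCq, dq, hdq, hbq⟩ := logGamma_asymp (2 * (1/q).toReal) (by linarith)
    set A : ℝ := Real.pi * Real.Gamma (2 * (1/p).toReal + 1) with hAdef
    set B : ℝ := Real.pi * Real.Gamma (2 * (1/q).toReal + 1) with hBdef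
    have hA : 0 < A := by
      have h1 := Real.Gamma_pos_of_pos (by linarith : (0:ℝ) < 2 * (1/p).toReal + 1)
      rw [hAdef]; exact mul_pos Real.pi_pos h1
    have hB : 0 < B := by
      have h1 := Real.Gamma_pos_of_pos (by linarith : (0:ℝ) < 2 * (1/q).toReal + 1)
      rw [hBdef]; exact mul_pos Real.pi_pos h1
    set K : ℝ := |Real.log A - Real.log B| / 2 + (Cp + Cq) / 2
        + |(1/q).toReal - (1/p).toReal| * |Real.log 2| with hKdef
    have hK : 0 ≤ K := by
      have h1 := abs_nonneg (Real.log A - Real.log B)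
      have h2 := mul_nonneg (abs_nonneg ((1/q).toReal - (1/p).toReal)) (abs_nonneg (Real.log 2))
      rw [hKdef]; linarith
    refine ⟨K / Real.log 2 + 1, by positivity, max (max dp dq) 1, fun d hd => ?_⟩
    have hd1 : 1 ≤ d := le_trans (le_max_right _ _) hd
    have hdR : (1:ℝ) ≤ (d:ℝ) := by exact_mod_cast hd1
    have hGp : 0 < Real.Gamma (2 * (1/p).toReal * d + 1) :=
      Real.Gamma_pos_of_pos (by positivity)
    have hGq : 0 < Real.Gamma (2 * (1/q).toReal * d + 1) :=
      Real.Gamma_pos_of_pos (by positivity)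
    have hpb : |Real.log (Real.Gamma (2 * (1/p).toReal * d + 1))
        - 2 * (1/p).toReal * d * Real.log d| ≤ Cp * d :=
      hbp d (le_trans (le_trans (le_max_left _ _) (le_max_left _ _)) hd)
    have hqb : |Real.log (Real.Gamma (2 * (1/q).toReal * d + 1))
        - 2 * (1/q).toReal * d * Real.log d| ≤ Cq * d :=
      hbq d (le_trans (le_trans (le_max_right _ _) (le_max_left _ _)) hd)
    rw [vol_complex_eq p hp d hd1, vol_complex_eq q hq d hd1]
    have hbound := core_assemble 2 A B _ _ (1/p).toReal (1/q).toReal Cp Cq two_pos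
      hA hB hGp hGq d hdR hpb hqb
    calc _ ≤ _ := hbound
      _ ≤ K / Real.log 2 + 1 := by rw [hKdef]; linarith
end
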